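/- Let (P_n) be a MOPS with normalization factors h_n and (P̂_n) its kernel MOPS (for the Christoffel transform at c₀) with normalization factors ĥ_n. Then P̂_n satisfies the three-term recurrence t·P̂_n = P̂_{n+1} + (h_{n+1}/ĥ_n + ĥ_n/h_n + c₀)·P̂_n + (ĥ_n/ĥ_{n-1})·P̂_{n-1} for n ≥ 1. -/

import Mathlib

/-!
Everything is compared through the polynomial `(X - c₀) P̂ₙ`. For a monic orthogonal family `Q`
with normalization factors `e`, a monic polynomial of degree `n + 1` whose moments against `X^k`
vanish for `k < n` and equal `a` for `k = n` must be `Qₙ₊₁ + (a / eₙ) Qₙ`, because the difference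
has degree `≤ n` and is orthogonal to all `X^k`, `k ≤ n`. For `L` this gives
`(X - c₀) P̂ₙ = Pₙ₊₁ + (ĥₙ / hₙ) Pₙ`; for `L̂` it gives `Pₙ₊₁ = P̂ₙ₊₁ + (hₙ₊₁ / ĥₙ) P̂ₙ`.
Substituting the second identity (at `n` and `n - 1`) into the first yields the recurrence.
-/

open Polynomial

variable {K : Type*} [Field K]

noncomputable def christoffel (L : K[X] →ₗ[K] K) (c : K) : K[X] →ₗ[K] K :=
  L ∘ₗ LinearMap.mulLeft K (X - C c)

theorem christoffel_apply (L : K[X] →ₗ[K] K) (c : K) (f : K[X]) :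
    christoffel L c f = L ((X - C c) * f) :=
  rfl

theorem LinearMap.map_C_mul (Φ : K[X] →ₗ[K] K) (a : K) (f : K[X]) : Φ (C a * f) = a * Φ f := by
  rw [← smul_eq_C_mul, map_smul, smul_eq_mul]

structure IsMonicOrthogonal (Φ : K[X] →ₗ[K] K) (Q : ℕ → K[X]) (e : ℕ → K) : Prop where
  monic : ∀ n, (Q n).Monic
  natDegree_eq : ∀ n, (Q n).natDegree = n
  orth : ∀ n k, k ≤ n → Φ (X ^ k * Q n) = if n = k then e n else 0
  ne_zero : ∀ n, e n ≠ 0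

namespace IsMonicOrthogonal

variable {Φ : K[X] →ₗ[K] K} {Q : ℕ → K[X]} {e : ℕ → K}

theorem degree_eq (hQ : IsMonicOrthogonal Φ Q e) (n : ℕ) : (Q n).degree = n := by
  rw [degree_eq_natDegree (hQ.monic n).ne_zero, hQ.natDegree_eq]

theorem orth_of_lt (hQ : IsMonicOrthogonal Φ Q e) {n k : ℕ} (hk : k < n) :
    Φ (X ^ k * Q n) = 0 := by
  rw [hQ.orth n k hk.le, if_neg hk.ne']

theorem eq_zero_of_degree_lt (hQ : IsMonicOrthogonal Φ Q e) :
    ∀ (n : ℕ) (R : K[X]), R.degree < n → (∀ k < n, Φ (X ^ k * R) = 0) → R = 0 := by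
  intro n
  induction n with
  | zero => exact fun R hR _ => degree_eq_bot.mp (Nat.WithBot.lt_zero_iff.mp hR)
  | succ n ih =>
    intro R hR hRorth
    set c := R.coeff n
    have hdeg : (R - C c * Q n).degree < n := by
      rw [degree_lt_iff_coeff_zero]
      intro m hm
      rcases hm.eq_or_lt with hnm | hlt
      · have hlead := (hQ.monic n).coeff_natDegree
        rw [hQ.natDegree_eq] at hlead
        rw [← hnm, coeff_sub, coeff_C_mul, hlead, mul_one, sub_self]
      · rw [coeff_sub, coeff_C_mul, coeff_eq_zero_of_degree_lt (hR.trans_le (by exact_mod_cast hlt)),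
          coeff_eq_zero_of_degree_lt (by rw [hQ.degree_eq]; exact_mod_cast hlt), mul_zero, sub_zero]
    have hRQ : R = C c * Q n := by
      refine sub_eq_zero.mp (ih _ hdeg fun k hk => ?_)
      rw [mul_sub, map_sub, hRorth k (by omega), mul_left_comm, Φ.map_C_mul, hQ.orth_of_lt hk,
        mul_zero, sub_zero]
    have hc : c * e n = 0 := by
      have := hRorth n n.lt_succ_self
      rwa [hRQ, mul_left_comm, Φ.map_C_mul, hQ.orth n n le_rfl, if_pos rfl] at this
    rw [hRQ, (mul_eq_zero.mp hc).resolve_right (hQ.ne_zero n), C_0, zero_mul]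

theorem eq_add_C_mul_of_monic (hQ : IsMonicOrthogonal Φ Q e) {n : ℕ} {a : K} {A : K[X]}
    (hA : A.Monic) (hAdeg : A.natDegree = n + 1)
    (hAorth : ∀ k ≤ n, Φ (X ^ k * A) = if n = k then a else 0) :
    A = Q (n + 1) + C (a / e n) * Q n := by
  have hAdeg' : A.degree = ↑(n + 1) := by rw [degree_eq_natDegree hA.ne_zero, hAdeg]
  have hdeg : (A - Q (n + 1) - C (a / e n) * Q n).degree < ↑(n + 1) := by
    refine (degree_sub_le _ _).trans_lt (max_lt ?_ ?_)
    · rw [← hAdeg']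
      refine degree_sub_lt_left (by rw [hAdeg', hQ.degree_eq]) hA.ne_zero ?_
      rw [hA.leadingCoeff, (hQ.monic _).leadingCoeff]
    · refine (degree_le_of_natDegree_le ?_).trans_lt (WithBot.coe_lt_coe.mpr n.lt_succ_self)
      exact (natDegree_C_mul_le _ _).trans (hQ.natDegree_eq n).le
  rw [← sub_eq_zero, ← sub_sub]
  refine hQ.eq_zero_of_degree_lt _ _ hdeg fun k hk => ?_
  rw [mul_sub, mul_sub, map_sub, map_sub, mul_left_comm, Φ.map_C_mul, hAorth k (by omega),
    hQ.orth_of_lt hk, hQ.orth n k (by omega)]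
  split_ifs <;> field_simp [hQ.ne_zero n] <;> ring

end IsMonicOrthogonal

section Christoffel

variable {L : K[X] →ₗ[K] K} {c : K} {P Q : ℕ → K[X]} {h ĥ : ℕ → K}

theorem X_sub_C_mul_eq_of_christoffel (hP : IsMonicOrthogonal L P h)
    (hQ : IsMonicOrthogonal (christoffel L c) Q ĥ) (n : ℕ) :
    (X - C c) * Q n = P (n + 1) + C (ĥ n / h n) * P n := by
  refine hP.eq_add_C_mul_of_monic ((monic_X_sub_C c).mul (hQ.monic n)) ?_ fun k hk => ?_
  · rw [(monic_X_sub_C c).natDegree_mul (hQ.monic n), natDegree_X_sub_C, hQ.natDegree_eq, add_comm]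
  · rw [mul_left_comm]
    exact hQ.orth n k hk

theorem eq_add_C_mul_of_christoffel (hP : IsMonicOrthogonal L P h)
    (hQ : IsMonicOrthogonal (christoffel L c) Q ĥ) (n : ℕ) :
    P (n + 1) = Q (n + 1) + C (h (n + 1) / ĥ n) * Q n := by
  refine hQ.eq_add_C_mul_of_monic (hP.monic _) (hP.natDegree_eq _) fun k hk => ?_
  rw [christoffel_apply, sub_mul, map_sub, L.map_C_mul, hP.orth_of_lt (Nat.lt_succ_of_le hk),
    mul_zero, sub_zero, ← mul_assoc, ← pow_succ', hP.orth (n + 1) (k + 1) (by omega)]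
  simp only [Nat.add_right_cancel_iff]

end Christoffel

/-- three-term recurrence for the kernel polynomials `P̂ₙ`. -/
theorem three_term_recurrence_Phat
    (c₀ : ℂ) (L : Polynomial ℂ →ₗ[ℂ] ℂ)
    (P Phat : ℕ → Polynomial ℂ) (h hhat : ℕ → ℂ)
    (hPmonic : ∀ n, (P n).Monic) (hPdeg : ∀ n, (P n).natDegree = n)
    (hPorth : ∀ n k, k ≤ n → L (X ^ k * P n) = if n = k then h n else 0)
    (hh : ∀ n, h n ≠ 0)
    (hQmonic : ∀ n, (Phat n).Monic) (hQdeg : ∀ n, (Phat n).natDegree = n)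
    (hQorth : ∀ n k, k ≤ n →
      L ((X - C c₀) * (X ^ k * Phat n)) = if n = k then hhat n else 0)
    (hhhat : ∀ n, hhat n ≠ 0) :
    ∀ n, 1 ≤ n →
      X * Phat n =
        Phat (n + 1) + C (h (n + 1) / hhat n + hhat n / h n + c₀) * Phat n
          + C (hhat n / hhat (n - 1)) * Phat (n - 1) := by
  have hP : IsMonicOrthogonal L P h := ⟨hPmonic, hPdeg, hPorth, hh⟩
  have hQ : IsMonicOrthogonal (christoffel L c₀) Phat hhat := ⟨hQmonic, hQdeg, hQorth, hhhat⟩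
  rintro n hn
  obtain ⟨m, rfl⟩ := Nat.exists_eq_add_of_le' hn
  calc X * Phat (m + 1) = (X - C c₀) * Phat (m + 1) + C c₀ * Phat (m + 1) := by ring
    _ = P (m + 2) + C (hhat (m + 1) / h (m + 1)) * P (m + 1) + C c₀ * Phat (m + 1) := by
      rw [X_sub_C_mul_eq_of_christoffel hP hQ]
    _ = _ := by
      rw [eq_add_C_mul_of_christoffel hP hQ (m + 1), eq_add_C_mul_of_christoffel hP hQ m,
        Nat.add_sub_cancel]
      have hratio : hhat (m + 1) / h (m + 1) * (h (m + 1) / hhat m) = hhat (m + 1) / hhat m := by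
        field_simp [hh (m + 1)]
      simp only [← hratio, C_add, C_mul]
      ring
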